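/- arXiv:1204.5894 — 2 statements merged into one kernel-verified Lean document; each statement's English description precedes it below -/
import Mathlib

section
/- For every integer n ≥ 1, every α ∈ (0,1), and every p ∈ (0,1): ∑_{X : p < p_L(X,α)} C(n,X) p^X (1-p)^{n-X} ≤ α/2, i.e. the probability (under X ~ Binomial(n,p)) that the Clopper–Pearson lower endpoint lies strictly above the true p is at most α/2. -/
open MeasureTheory

/-- The Beta function `β(r,s) = ∫₀¹ t^(r-1) (1-t)^(s-1) dt`. -/
noncomputable def betaFun (r s : ℝ) : ℝ :=
  ∫ t in (0:ℝ)..1, t ^ (r - 1) * (1 - t) ^ (s - 1)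

/-- The Beta(r,s) density `f(t;r,s) = t^(r-1)(1-t)^(s-1)/β(r,s)`. -/
noncomputable def betaPDF (r s t : ℝ) : ℝ :=
  t ^ (r - 1) * (1 - t) ^ (s - 1) / betaFun r s

/-- The Beta(r,s) cumulative distribution function `∫₀ᵖ f(t;r,s) dt`. -/
noncomputable def betaCDF (r s p : ℝ) : ℝ :=
  ∫ t in (0:ℝ)..p, betaPDF r s t

/- The Beta quantile `B(q;r,s)`: the (unique, for `r,s>0`, `q∈(0,1)`) `t ∈ (0,1)`
with `∫₀ᵗ f(u;r,s) du = q`. -/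
open Classical in
noncomputable def betaQuantile (r s q : ℝ) : ℝ :=
  if h : ∃ t, t ∈ Set.Ioo (0:ℝ) 1 ∧ betaCDF r s t = q then h.choose else 0

/-- Lower Clopper–Pearson endpoint: `p_L(X,α) = B(α/2; X, n-X+1)` for `X ≥ 1`,
and `p_L(0,α) = 0`. -/
noncomputable def cpLower (n X : ℕ) (α : ℝ) : ℝ :=
  if X = 0 then 0 else betaQuantile (X : ℝ) ((n : ℝ) - X + 1) (α / 2)

/-- Upper Clopper–Pearson endpoint: `p_U(X,α) = B(1-α/2; X+1, n-X)` for `X ≤ n-1`,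
and `p_U(n,α) = 1`. -/
noncomputable def cpUpper (n X : ℕ) (α : ℝ) : ℝ :=
  if X = n then 1 else betaQuantile ((X : ℝ) + 1) ((n : ℝ) - X) (1 - α / 2)

/-- The binomial probability `b(X;n,p) = C(n,X) p^X (1-p)^(n-X)`. -/
noncomputable def binomPMF (n X : ℕ) (p : ℝ) : ℝ :=
  (n.choose X : ℝ) * p ^ X * (1 - p) ^ (n - X)

/- The event `p < p_L(X, α)` forces `X ≥ k`, where `k` is the least such `X`, and
`P(X ≥ k) = ∑_{j ≥ k} b(j; n, p)` is the Beta(k, n-k+1) distribution function at `p`, because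
its derivative in `p` telescopes to the Beta(k, n-k+1) density. Being monotone, it is at most its
value `α/2` at `p_L(k, α) > p`. -/

open Finset

lemma binomPMF_nonneg (n X : ℕ) {p : ℝ} (hp₀ : 0 ≤ p) (hp₁ : p ≤ 1) : 0 ≤ binomPMF n X p := by
  have : 0 ≤ 1 - p := by linarith
  unfold binomPMF
  positivity

noncomputable def binomTail (n k : ℕ) (p : ℝ) : ℝ :=
  ∑ j ∈ Icc k n, binomPMF n j p

noncomputable def binomTailDeriv (n k : ℕ) (t : ℝ) : ℝ :=
  (n.choose k : ℝ) * k * t ^ (k - 1) * (1 - t) ^ (n - k)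

lemma continuous_binomTailDeriv (n k : ℕ) : Continuous (binomTailDeriv n k) := by
  unfold binomTailDeriv
  fun_prop

lemma binomTailDeriv_nonneg (n k : ℕ) {t : ℝ} (ht₀ : 0 ≤ t) (ht₁ : t ≤ 1) :
    0 ≤ binomTailDeriv n k t := by
  have : 0 ≤ 1 - t := by linarith
  unfold binomTailDeriv
  positivity

lemma hasDerivAt_binomPMF (n j : ℕ) (p : ℝ) :
    HasDerivAt (binomPMF n j) (binomTailDeriv n j p - binomTailDeriv n (j + 1) p) p := by
  have hpow : HasDerivAt (fun p : ℝ => (1 - p) ^ (n - j))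
      ((n - j : ℕ) * (1 - p) ^ (n - j - 1) * (-1)) p := by
    simpa [Function.comp_def] using
      (hasDerivAt_pow (n - j) (1 - p)).comp p ((hasDerivAt_id p).const_sub 1)
  refine (((hasDerivAt_pow j p).const_mul (n.choose j : ℝ)).mul hpow).congr_deriv ?_
  unfold binomTailDeriv
  rcases le_or_gt n j with hnj | hjn
  · simp only [Nat.sub_eq_zero_of_le hnj, Nat.choose_eq_zero_of_lt (Nat.lt_succ_of_le hnj),
      pow_zero, mul_one, CharP.cast_eq_zero, zero_tsub, mul_neg, neg_zero, mul_zero, add_zero,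
      Nat.cast_add, Nat.cast_one, zero_mul, add_tsub_cancel_right, sub_zero]
    ring
  · have hchoose : (n.choose (j + 1) : ℝ) * (j + 1) = n.choose j * (n - j : ℕ) := by
      exact_mod_cast Nat.choose_succ_right_eq n j
    rw [show n - j - 1 = n - (j + 1) by omega, Nat.add_sub_cancel]
    push_cast
    linear_combination (p ^ j * (1 - p) ^ (n - (j + 1))) * hchoose

lemma hasDerivAt_binomTail (n k : ℕ) (p : ℝ) :
    HasDerivAt (binomTail n k) (binomTailDeriv n k p) p := by
  refine (HasDerivAt.fun_sum (u := Icc k n) fun j _ => hasDerivAt_binomPMF n j p).congr_deriv ?_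
  rcases le_or_gt k n with hkn | hnk
  · have htop : binomTailDeriv n (n + 1) p = 0 := by
      simp [binomTailDeriv, Nat.choose_succ_self]
    have htelescope := sum_Icc_sub hkn fun j => binomTailDeriv n j p
    rw [sum_sub_distrib] at htelescope ⊢
    linarith
  · simp [Icc_eq_empty_of_lt hnk, binomTailDeriv, Nat.choose_eq_zero_of_lt hnk]

lemma binomTail_zero (n : ℕ) {k : ℕ} (hk : 1 ≤ k) : binomTail n k 0 = 0 :=
  sum_eq_zero fun j hj => by
    simp [binomPMF, zero_pow (by grind : j ≠ 0)]

lemma binomTail_one {n k : ℕ} (hkn : k ≤ n) : binomTail n k 1 = 1 := by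
  rw [binomTail, sum_eq_single_of_mem n (right_mem_Icc.mpr hkn)]
  · simp [binomPMF]
  · intro j hj hjn
    simp [binomPMF, zero_pow (by grind : n - j ≠ 0)]

lemma binomTail_eq_integral (n : ℕ) {k : ℕ} (hk : 1 ≤ k) (p : ℝ) :
    binomTail n k p = ∫ t in (0:ℝ)..p, binomTailDeriv n k t := by
  rw [intervalIntegral.integral_eq_sub_of_hasDerivAt (fun t _ => hasDerivAt_binomTail n k t)
    ((continuous_binomTailDeriv n k).intervalIntegrable 0 p), binomTail_zero n hk, sub_zero]

lemma monotoneOn_binomTail (n k : ℕ) : MonotoneOn (binomTail n k) (Set.Icc 0 1) := by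
  refine monotoneOn_of_hasDerivWithinAt_nonneg (convex_Icc 0 1)
    (fun t _ => (hasDerivAt_binomTail n k t).continuousAt.continuousWithinAt)
    (fun t _ => (hasDerivAt_binomTail n k t).hasDerivWithinAt) fun t ht => ?_
  rw [interior_Icc] at ht
  exact binomTailDeriv_nonneg n k ht.1.le ht.2.le

lemma betaIntegrand_natCast {n k : ℕ} (hk : 1 ≤ k) (hkn : k ≤ n) (t : ℝ) :
    t ^ ((k : ℝ) - 1) * (1 - t) ^ ((n : ℝ) - k + 1 - 1) = t ^ (k - 1) * (1 - t) ^ (n - k) := by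
  rw [← Real.rpow_natCast, ← Real.rpow_natCast, Nat.cast_sub hk, Nat.cast_sub hkn]
  ring_nf

lemma betaFun_natCast {n k : ℕ} (hk : 1 ≤ k) (hkn : k ≤ n) :
    betaFun k ((n : ℝ) - k + 1) = ((n.choose k : ℝ) * k)⁻¹ := by
  have htotal : ∫ t in (0:ℝ)..1, binomTailDeriv n k t = 1 := by
    rw [← binomTail_eq_integral n hk, binomTail_one hkn]
  simp only [binomTailDeriv, mul_assoc, intervalIntegral.integral_const_mul] at htotal
  rw [betaFun, intervalIntegral.integral_congr fun t _ => betaIntegrand_natCast hk hkn t]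
  exact eq_inv_of_mul_eq_one_left (by linear_combination htotal)

lemma betaCDF_natCast_eq_binomTail {n k : ℕ} (hk : 1 ≤ k) (hkn : k ≤ n) (p : ℝ) :
    betaCDF k ((n : ℝ) - k + 1) p = binomTail n k p := by
  rw [binomTail_eq_integral n hk, betaCDF]
  congr 1 with t
  rw [betaPDF, betaIntegrand_natCast hk hkn, betaFun_natCast hk hkn, div_inv_eq_mul, binomTailDeriv]
  ring

lemma binomTail_le_of_lt_cpLower {n k : ℕ} (hkn : k ≤ n) {α p : ℝ} (hp : 0 < p)
    (h : p < cpLower n k α) : binomTail n k p ≤ α / 2 := by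
  have hk : k ≠ 0 := by
    rintro rfl
    rw [cpLower, if_pos rfl] at h
    linarith
  simp only [cpLower, hk, if_false, betaQuantile] at h
  split_ifs at h with hq
  · obtain ⟨⟨-, hq₁⟩, hcdf⟩ := hq.choose_spec
    rw [← hcdf, betaCDF_natCast_eq_binomTail (Nat.one_le_iff_ne_zero.mpr hk) hkn]
    exact monotoneOn_binomTail n k ⟨hp.le, by linarith⟩ ⟨hp.le.trans h.le, hq₁.le⟩ h.le
  · linarith

open Classical in
theorem clopperPearson_lower_noncoverage_general (n : ℕ) (α : ℝ) (hα : α ∈ Set.Ioo (0:ℝ) 1)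
    (p : ℝ) (hp : p ∈ Set.Ioo (0:ℝ) 1) :
    ∑ X ∈ Finset.range (n + 1), (if p < cpLower n X α then binomPMF n X p else 0) ≤ α / 2 := by
  rw [← sum_filter]
  set S := (range (n + 1)).filter fun X => p < cpLower n X α
  rcases S.eq_empty_or_nonempty with hS | hS
  · rw [hS, sum_empty]
    linarith [hα.1]
  obtain ⟨hk, hpk⟩ := mem_filter.mp (S.min'_mem hS)
  have hkn : S.min' hS ≤ n := Nat.lt_succ_iff.mp (mem_range.mp hk)
  have hS_tail : S ⊆ Icc (S.min' hS) n := fun X hX =>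
    mem_Icc.mpr ⟨S.min'_le X hX, Nat.lt_succ_iff.mp (mem_range.mp (mem_filter.mp hX).1)⟩
  calc ∑ X ∈ S, binomPMF n X p
      ≤ binomTail n (S.min' hS) p := sum_le_sum_of_subset_of_nonneg hS_tail
        fun X _ _ => binomPMF_nonneg n X hp.1.le hp.2.le
    _ ≤ α / 2 := binomTail_le_of_lt_cpLower hkn hp.1 hpk

open Classical in
/-- The probability that the Clopper–Pearson lower endpoint lies strictly above the true `p`
is at most `α/2`. -/
theorem clopperPearson_lower_noncoverage (n : ℕ) (hn : 1 ≤ n) (α : ℝ) (hα : α ∈ Set.Ioo (0:ℝ) 1)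
    (p : ℝ) (hp : p ∈ Set.Ioo (0:ℝ) 1) :
    ∑ X ∈ Finset.range (n + 1), (if p < cpLower n X α then binomPMF n X p else 0) ≤ α / 2 :=
  clopperPearson_lower_noncoverage_general n α hα p hp
end

section
/- Lemma 1 of the paper: for every integer n ≥ 1 and all r, s > 0, the mean coverage function α ↦ C(α, n, r, s) of the level-(1-α) Clopper–Pearson interval with respect to the Beta(r,s) density is continuous and strictly decreasing on (0,1). -/
/-!
Integrating the binomial weights against the Beta density turns the `X`-th summand of the mean
coverage into `max (G_X(p_U(X,α)) - G_X(p_L(X,α))) 0`, where `G_X(t) = ∫₀ᵗ b(X;n,p) f(p;r,s) dp`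
is continuous and strictly increasing on `[0,1]`. Beta quantiles are right inverses of the
continuous, strictly increasing Beta CDF, hence continuous and strictly increasing in the level,
so `p_L(X,·)` is nondecreasing, `p_U(X,·)` is nonincreasing, and both are continuous. Every
summand is therefore continuous and nonincreasing in `α`, and the summand `X = 0`, which is
`G_0(p_U(0,α))`, is strictly decreasing because `p_U(0,·)` is when `n ≥ 1`.
-/

open MeasureTheory

open Classical in
/-- The mean coverage `C(α,n,r,s)` of the level-(1-α) Clopper–Pearson interval with respect
to the Beta(r,s) density. -/
noncomputable def meanCoverage (α : ℝ) (n : ℕ) (r s : ℝ) : ℝ :=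
  ∫ p in (0:ℝ)..1,
    (∑ X ∈ Finset.range (n + 1),
      (if cpLower n X α ≤ p ∧ p ≤ cpUpper n X α then binomPMF n X p else 0)) * betaPDF r s p

open Set MeasureTheory intervalIntegral

section Primitive

variable {f : ℝ → ℝ} {a b c d : ℝ}

lemma IntervalIntegrable.of_mem_Icc (hf : IntervalIntegrable f volume a b)
    (hc : c ∈ Icc a b) (hd : d ∈ Icc a b) : IntervalIntegrable f volume c d :=
  hf.mono_set (uIcc_subset_uIcc (Icc_subset_uIcc hc) (Icc_subset_uIcc hd))

lemma integral_sub_integral_of_mem_Icc (hf : IntervalIntegrable f volume a b)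
    (hc : c ∈ Icc a b) (hd : d ∈ Icc a b) :
    (∫ x in a..d, f x) - ∫ x in a..c, f x = ∫ x in c..d, f x :=
  integral_interval_sub_left (hf.of_mem_Icc (left_mem_Icc.2 (hc.1.trans hc.2)) hd)
    (hf.of_mem_Icc (left_mem_Icc.2 (hc.1.trans hc.2)) hc)

lemma continuousOn_primitive_Icc (hf : IntervalIntegrable f volume a b) (hab : a ≤ b) :
    ContinuousOn (fun t => ∫ x in a..t, f x) (Icc a b) := by
  simpa only [uIcc_of_le hab] using continuousOn_primitive_interval' hf left_mem_uIcc

lemma strictMonoOn_primitive_Icc (hf : IntervalIntegrable f volume a b)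
    (hpos : ∀ x ∈ Ioo a b, 0 < f x) :
    StrictMonoOn (fun t => ∫ x in a..t, f x) (Icc a b) := by
  intro c hc d hd hcd
  have : 0 < ∫ x in c..d, f x :=
    intervalIntegral_pos_of_pos_on (hf.of_mem_Icc hc hd)
      (fun x hx => hpos x ⟨hc.1.trans_lt hx.1, hx.2.trans_le hd.2⟩) hcd
  linarith [integral_sub_integral_of_mem_Icc hf hc hd]

lemma integral_indicator_Icc_eq_max (hf : IntervalIntegrable f volume a b)
    (hpos : ∀ x ∈ Ioo a b, 0 < f x) (hc : c ∈ Icc a b) (hd : d ∈ Icc a b) :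
    ∫ x in a..b, (Icc c d).indicator f x
      = max ((∫ x in a..d, f x) - ∫ x in a..c, f x) 0 := by
  have hmono := strictMonoOn_primitive_Icc hf hpos
  rcases lt_or_ge d c with hdc | hcd
  · simp only [Icc_eq_empty_of_lt hdc, indicator_empty, intervalIntegral.integral_zero]
    exact (max_eq_right (sub_nonpos.2 (hmono hd hc hdc).le)).symm
  · have hnonneg : 0 ≤ ∫ x in c..d, f x :=
      integral_sub_integral_of_mem_Icc hf hc hd ▸ sub_nonneg.2 (hmono.monotoneOn hc hd hcd)
    have hIcc : (Icc c d).indicator f =ᵐ[volume] (Ioc c d).indicator f :=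
      indicator_ae_eq_of_ae_eq_set Ioc_ae_eq_Icc.symm
    rw [integral_congr_ae (hIcc.mono fun x hx _ => hx), integral_of_le (hc.1.trans hc.2),
      setIntegral_indicator measurableSet_Ioc,
      inter_eq_right.2 (Ioc_subset_Ioc hc.1 hd.2), ← integral_of_le hcd,
      integral_sub_integral_of_mem_Icc hf hc hd, max_eq_left hnonneg]

end Primitive

section RightInverse

variable {F Q : ℝ → ℝ} {s : Set ℝ}

lemma StrictMonoOn.strictMonoOn_of_rightInvOn (hF : StrictMonoOn F s) (hQ : MapsTo Q s s)
    (hFQ : RightInvOn Q F s) : StrictMonoOn Q s := by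
  intro p hp q hq hpq
  by_contra! hle
  have := hF.monotoneOn (hQ hq) (hQ hp) hle
  rw [hFQ hp, hFQ hq] at this
  linarith

lemma StrictMonoOn.continuousOn_of_rightInvOn (hs : IsOpen s) (hF : StrictMonoOn F s)
    (hFs : MapsTo F s s) (hQ : MapsTo Q s s) (hFQ : RightInvOn Q F s) : ContinuousOn Q s := by
  have hsurj : s ⊆ Q '' s := fun x hx =>
    ⟨F x, hFs hx, hF.injOn (hQ (hFs hx)) hx (hFQ (hFs hx))⟩
  intro q hq
  exact ((hF.strictMonoOn_of_rightInvOn hQ hFQ).continuousAt_of_image_mem_nhds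
    (hs.mem_nhds hq) (Filter.mem_of_superset (hs.mem_nhds (hQ hq)) hsurj)).continuousWithinAt

end RightInverse

section Beta

variable {r s : ℝ}

lemma intervalIntegrable_betaKernel (hr : 0 < r) (hs : 0 < s) :
    IntervalIntegrable (fun t : ℝ => t ^ (r - 1) * (1 - t) ^ (s - 1)) volume 0 1 := by
  have hc := (Complex.betaIntegral_convergent (u := r) (v := s) (by simpa) (by simpa)).norm
  rw [intervalIntegrable_iff_integrableOn_Ioo_of_le zero_le_one] at hc ⊢
  refine hc.congr_fun (fun t ht => ?_) measurableSet_Ioo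
  have h1t : (0:ℝ) < 1 - t := by linarith [ht.2]
  dsimp only
  rw [norm_mul, show (1:ℂ) - t = ((1 - t : ℝ) : ℂ) by push_cast; ring,
    Complex.norm_cpow_eq_rpow_re_of_pos ht.1, Complex.norm_cpow_eq_rpow_re_of_pos h1t]
  simp

lemma betaKernel_pos {t : ℝ} (ht : t ∈ Ioo (0:ℝ) 1) : 0 < t ^ (r - 1) * (1 - t) ^ (s - 1) :=
  mul_pos (Real.rpow_pos_of_pos ht.1 _) (Real.rpow_pos_of_pos (by linarith [ht.2]) _)

lemma betaFun_pos (hr : 0 < r) (hs : 0 < s) : 0 < betaFun r s :=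
  intervalIntegral_pos_of_pos_on (intervalIntegrable_betaKernel hr hs)
    (fun _ ht => betaKernel_pos ht) one_pos

lemma betaPDF_pos (hr : 0 < r) (hs : 0 < s) {t : ℝ} (ht : t ∈ Ioo (0:ℝ) 1) :
    0 < betaPDF r s t :=
  div_pos (betaKernel_pos ht) (betaFun_pos hr hs)

lemma intervalIntegrable_betaPDF (hr : 0 < r) (hs : 0 < s) :
    IntervalIntegrable (betaPDF r s) volume 0 1 :=
  (intervalIntegrable_betaKernel hr hs).div_const _

lemma betaCDF_zero : betaCDF r s 0 = 0 := integral_same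

lemma betaCDF_one (hr : 0 < r) (hs : 0 < s) : betaCDF r s 1 = 1 := by
  unfold betaCDF betaPDF
  rw [intervalIntegral.integral_div]
  exact div_self (betaFun_pos hr hs).ne'

lemma strictMonoOn_betaCDF (hr : 0 < r) (hs : 0 < s) : StrictMonoOn (betaCDF r s) (Icc 0 1) :=
  strictMonoOn_primitive_Icc (intervalIntegrable_betaPDF hr hs) fun _ => betaPDF_pos hr hs

lemma continuousOn_betaCDF (hr : 0 < r) (hs : 0 < s) : ContinuousOn (betaCDF r s) (Icc 0 1) :=
  continuousOn_primitive_Icc (intervalIntegrable_betaPDF hr hs) zero_le_one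

lemma mapsTo_betaCDF (hr : 0 < r) (hs : 0 < s) : MapsTo (betaCDF r s) (Ioo 0 1) (Ioo 0 1) := by
  intro t ht
  have hmono := strictMonoOn_betaCDF hr hs
  have h0 := hmono (left_mem_Icc.2 zero_le_one) (Ioo_subset_Icc_self ht) ht.1
  have h1 := hmono (Ioo_subset_Icc_self ht) (right_mem_Icc.2 zero_le_one) ht.2
  rw [betaCDF_zero] at h0
  rw [betaCDF_one hr hs] at h1
  exact ⟨h0, h1⟩

lemma betaQuantile_spec (hr : 0 < r) (hs : 0 < s) {q : ℝ} (hq : q ∈ Ioo (0:ℝ) 1) :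
    betaQuantile r s q ∈ Ioo (0:ℝ) 1 ∧ betaCDF r s (betaQuantile r s q) = q := by
  have hex : ∃ t, t ∈ Ioo (0:ℝ) 1 ∧ betaCDF r s t = q := by
    have := intermediate_value_Ioo zero_le_one (continuousOn_betaCDF hr hs)
    rw [betaCDF_zero, betaCDF_one hr hs] at this
    exact this hq
  rw [betaQuantile, dif_pos hex]
  exact hex.choose_spec

lemma strictMonoOn_betaQuantile (hr : 0 < r) (hs : 0 < s) :
    StrictMonoOn (betaQuantile r s) (Ioo 0 1) :=
  ((strictMonoOn_betaCDF hr hs).mono Ioo_subset_Icc_self).strictMonoOn_of_rightInvOn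
    (fun _ hq => (betaQuantile_spec hr hs hq).1) fun _ hq => (betaQuantile_spec hr hs hq).2

lemma continuousOn_betaQuantile (hr : 0 < r) (hs : 0 < s) :
    ContinuousOn (betaQuantile r s) (Ioo 0 1) :=
  ((strictMonoOn_betaCDF hr hs).mono Ioo_subset_Icc_self).continuousOn_of_rightInvOn isOpen_Ioo
    (mapsTo_betaCDF hr hs) (fun _ hq => (betaQuantile_spec hr hs hq).1)
    fun _ hq => (betaQuantile_spec hr hs hq).2

end Beta

section ClopperPearson

variable {n X : ℕ}

lemma mapsTo_half_Ioo : MapsTo (fun α : ℝ => α / 2) (Ioo 0 1) (Ioo 0 1) :=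
  fun _ hα => ⟨by linarith [hα.1], by linarith [hα.2]⟩

lemma mapsTo_one_sub_half_Ioo : MapsTo (fun α : ℝ => 1 - α / 2) (Ioo 0 1) (Ioo 0 1) :=
  fun _ hα => ⟨by linarith [hα.2], by linarith [hα.1]⟩

lemma cpLower_zero : cpLower n 0 = fun _ => 0 :=
  funext fun _ => if_pos rfl

lemma cpUpper_self : cpUpper n n = fun _ => 1 :=
  funext fun _ => if_pos rfl

lemma cpLower_eq_betaQuantile (hX0 : X ≠ 0) :
    cpLower n X = fun α => betaQuantile X ((n : ℝ) - X + 1) (α / 2) := by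
  funext α
  simp only [cpLower, if_neg hX0]

lemma cpUpper_eq_betaQuantile (hXn : X ≠ n) :
    cpUpper n X = fun α => betaQuantile ((X : ℝ) + 1) ((n : ℝ) - X) (1 - α / 2) := by
  funext α
  simp only [cpUpper, if_neg hXn]

lemma cpLower_shape_pos (hX0 : X ≠ 0) (hX : X ≤ n) : (0 : ℝ) < X ∧ (0 : ℝ) < n - X + 1 :=
  ⟨Nat.cast_pos.2 (Nat.pos_of_ne_zero hX0), by linarith [(Nat.cast_le (α := ℝ)).2 hX]⟩

lemma cpUpper_shape_pos (hX : X < n) : (0 : ℝ) < X + 1 ∧ (0 : ℝ) < n - X :=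
  ⟨by positivity, sub_pos.2 (Nat.cast_lt.2 hX)⟩

lemma cpLower_mem_Icc (hX : X ≤ n) {α : ℝ} (hα : α ∈ Ioo (0:ℝ) 1) :
    cpLower n X α ∈ Icc (0:ℝ) 1 := by
  rcases eq_or_ne X 0 with rfl | hX0
  · simp [cpLower_zero]
  · rw [cpLower_eq_betaQuantile hX0]
    obtain ⟨hr, hs⟩ := cpLower_shape_pos hX0 hX
    exact Ioo_subset_Icc_self (betaQuantile_spec hr hs (mapsTo_half_Ioo hα)).1

lemma cpUpper_mem_Icc (hX : X ≤ n) {α : ℝ} (hα : α ∈ Ioo (0:ℝ) 1) :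
    cpUpper n X α ∈ Icc (0:ℝ) 1 := by
  rcases eq_or_ne X n with rfl | hXn
  · simp [cpUpper_self]
  · rw [cpUpper_eq_betaQuantile hXn]
    obtain ⟨hr, hs⟩ := cpUpper_shape_pos (hX.lt_of_ne hXn)
    exact Ioo_subset_Icc_self (betaQuantile_spec hr hs (mapsTo_one_sub_half_Ioo hα)).1

lemma monotoneOn_cpLower (hX : X ≤ n) : MonotoneOn (cpLower n X) (Ioo 0 1) := by
  rcases eq_or_ne X 0 with rfl | hX0
  · rw [cpLower_zero]
    exact monotoneOn_const
  · rw [cpLower_eq_betaQuantile hX0]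
    obtain ⟨hr, hs⟩ := cpLower_shape_pos hX0 hX
    exact ((strictMonoOn_betaQuantile hr hs).comp (fun _ _ _ _ h => by linarith)
      mapsTo_half_Ioo).monotoneOn

lemma strictAntiOn_cpUpper (hX : X < n) : StrictAntiOn (cpUpper n X) (Ioo 0 1) := by
  rw [cpUpper_eq_betaQuantile hX.ne]
  obtain ⟨hr, hs⟩ := cpUpper_shape_pos hX
  exact (strictMonoOn_betaQuantile hr hs).comp_strictAntiOn (fun _ _ _ _ h => by linarith)
    mapsTo_one_sub_half_Ioo

lemma antitoneOn_cpUpper (hX : X ≤ n) : AntitoneOn (cpUpper n X) (Ioo 0 1) := by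
  rcases hX.lt_or_eq with hX | rfl
  · exact (strictAntiOn_cpUpper hX).antitoneOn
  · rw [cpUpper_self]
    exact antitoneOn_const

lemma continuousOn_cpLower (hX : X ≤ n) : ContinuousOn (cpLower n X) (Ioo 0 1) := by
  rcases eq_or_ne X 0 with rfl | hX0
  · rw [cpLower_zero]
    exact continuousOn_const
  · rw [cpLower_eq_betaQuantile hX0]
    obtain ⟨hr, hs⟩ := cpLower_shape_pos hX0 hX
    exact (continuousOn_betaQuantile hr hs).comp (by fun_prop) mapsTo_half_Ioo

lemma continuousOn_cpUpper (hX : X ≤ n) : ContinuousOn (cpUpper n X) (Ioo 0 1) := by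
  rcases eq_or_ne X n with rfl | hXn
  · rw [cpUpper_self]
    exact continuousOn_const
  · rw [cpUpper_eq_betaQuantile hXn]
    obtain ⟨hr, hs⟩ := cpUpper_shape_pos (hX.lt_of_ne hXn)
    exact (continuousOn_betaQuantile hr hs).comp (by fun_prop) mapsTo_one_sub_half_Ioo

end ClopperPearson

section Coverage

variable {n X : ℕ} {r s : ℝ}

lemma binomPMF_pos (hX : X ≤ n) {p : ℝ} (hp : p ∈ Ioo (0:ℝ) 1) : 0 < binomPMF n X p :=
  mul_pos (mul_pos (Nat.cast_pos.2 (Nat.choose_pos hX)) (pow_pos hp.1 _))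
    (pow_pos (sub_pos.2 hp.2) _)

lemma intervalIntegrable_binomPMF_mul_betaPDF (hr : 0 < r) (hs : 0 < s) :
    IntervalIntegrable (fun p => binomPMF n X p * betaPDF r s p) volume 0 1 :=
  (intervalIntegrable_betaPDF hr hs).continuousOn_mul (by unfold binomPMF; fun_prop)

/-- `P(p ≤ t, X = k)` when `p ∼ Beta(r,s)` and `X ∣ p ∼ Bin(n,p)`. -/
noncomputable def binomBetaCDF (n k : ℕ) (r s t : ℝ) : ℝ :=
  ∫ p in (0:ℝ)..t, binomPMF n k p * betaPDF r s p

lemma binomBetaCDF_zero : binomBetaCDF n X r s 0 = 0 := integral_same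

lemma strictMonoOn_binomBetaCDF (hX : X ≤ n) (hr : 0 < r) (hs : 0 < s) :
    StrictMonoOn (binomBetaCDF n X r s) (Icc 0 1) :=
  strictMonoOn_primitive_Icc (intervalIntegrable_binomPMF_mul_betaPDF hr hs)
    fun _ hp => mul_pos (binomPMF_pos hX hp) (betaPDF_pos hr hs hp)

lemma continuousOn_binomBetaCDF (hr : 0 < r) (hs : 0 < s) :
    ContinuousOn (binomBetaCDF n X r s) (Icc 0 1) :=
  continuousOn_primitive_Icc (intervalIntegrable_binomPMF_mul_betaPDF hr hs) zero_le_one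

/-- `P(X = k, p_L(k,α) ≤ p ≤ p_U(k,α))` in the model of `binomBetaCDF`; the `max` spares us
proving `p_L ≤ p_U`. -/
noncomputable def coverageTerm (n k : ℕ) (r s α : ℝ) : ℝ :=
  max (binomBetaCDF n k r s (cpUpper n k α) - binomBetaCDF n k r s (cpLower n k α)) 0

lemma meanCoverage_eq_sum_coverageTerm (hr : 0 < r) (hs : 0 < s) {α : ℝ}
    (hα : α ∈ Ioo (0:ℝ) 1) :
    meanCoverage α n r s = ∑ X ∈ Finset.range (n + 1), coverageTerm n X r s α := by
  have hind : ∀ X L U p, (if L ≤ p ∧ p ≤ U then binomPMF n X p else 0) * betaPDF r s p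
      = (Icc L U).indicator (fun p => binomPMF n X p * betaPDF r s p) p := by
    intro X L U p
    simp only [indicator_apply, mem_Icc, ite_mul, zero_mul]
  have hint : ∀ X L U, IntervalIntegrable
      ((Icc L U).indicator (fun p => binomPMF n X p * betaPDF r s p)) volume 0 1 :=
    fun X L U => intervalIntegrable_iff.2 ((intervalIntegrable_iff.1
      (intervalIntegrable_binomPMF_mul_betaPDF hr hs)).indicator measurableSet_Icc)
  simp only [meanCoverage, Finset.sum_mul, hind]
  rw [integral_finsetSum fun X _ => hint X _ _]
  refine Finset.sum_congr rfl fun X hX => ?_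
  have hXn : X ≤ n := Nat.lt_succ_iff.1 (Finset.mem_range.1 hX)
  exact integral_indicator_Icc_eq_max (intervalIntegrable_binomPMF_mul_betaPDF hr hs)
    (fun _ hp => mul_pos (binomPMF_pos hXn hp) (betaPDF_pos hr hs hp))
    (cpLower_mem_Icc hXn hα) (cpUpper_mem_Icc hXn hα)

lemma continuousOn_coverageTerm (hX : X ≤ n) (hr : 0 < r) (hs : 0 < s) :
    ContinuousOn (coverageTerm n X r s) (Ioo 0 1) := by
  have hU : ContinuousOn (fun α => binomBetaCDF n X r s (cpUpper n X α)) (Ioo 0 1) :=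
    (continuousOn_binomBetaCDF hr hs).comp (continuousOn_cpUpper hX) fun _ => cpUpper_mem_Icc hX
  have hL : ContinuousOn (fun α => binomBetaCDF n X r s (cpLower n X α)) (Ioo 0 1) :=
    (continuousOn_binomBetaCDF hr hs).comp (continuousOn_cpLower hX) fun _ => cpLower_mem_Icc hX
  exact (hU.sub hL).sup continuousOn_const

lemma antitoneOn_coverageTerm (hX : X ≤ n) (hr : 0 < r) (hs : 0 < s) :
    AntitoneOn (coverageTerm n X r s) (Ioo 0 1) := by
  intro a ha b hb hab
  have hmono := (strictMonoOn_binomBetaCDF hX hr hs).monotoneOn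
  refine max_le_max (sub_le_sub ?_ ?_) le_rfl
  · exact hmono (cpUpper_mem_Icc hX hb) (cpUpper_mem_Icc hX ha) (antitoneOn_cpUpper hX ha hb hab)
  · exact hmono (cpLower_mem_Icc hX ha) (cpLower_mem_Icc hX hb) (monotoneOn_cpLower hX ha hb hab)

lemma strictAntiOn_coverageTerm_zero (hn : 1 ≤ n) (hr : 0 < r) (hs : 0 < s) :
    StrictAntiOn (coverageTerm n 0 r s) (Ioo 0 1) := by
  have hmono := strictMonoOn_binomBetaCDF (n := n) (Nat.zero_le n) hr hs
  have hU := fun {α} (hα : α ∈ Ioo (0:ℝ) 1) => cpUpper_mem_Icc (Nat.zero_le n) hα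
  have heq : EqOn (coverageTerm n 0 r s) (binomBetaCDF n 0 r s ∘ cpUpper n 0) (Ioo 0 1) := by
    intro α hα
    have hnonneg := hmono.monotoneOn (left_mem_Icc.2 zero_le_one) (hU hα) (hU hα).1
    rw [binomBetaCDF_zero] at hnonneg
    simp only [coverageTerm, cpLower_zero, binomBetaCDF_zero, sub_zero, Function.comp_apply,
      max_eq_left hnonneg]
  exact (hmono.comp_strictAntiOn (strictAntiOn_cpUpper hn) fun _ => hU).congr heq.symm

end Coverage

/-- Lemma 1 of the paper: the mean coverage `α ↦ C(α,n,r,s)` is continuous and strictly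
decreasing on (0,1). -/
theorem meanCoverage_continuous_strictAnti (n : ℕ) (hn : 1 ≤ n) (r s : ℝ)
    (hr : 0 < r) (hs : 0 < s) :
    ContinuousOn (fun α : ℝ => meanCoverage α n r s) (Set.Ioo (0:ℝ) 1) ∧
    StrictAntiOn (fun α : ℝ => meanCoverage α n r s) (Set.Ioo (0:ℝ) 1) := by
  have hsum : EqOn (fun α => ∑ X ∈ Finset.range (n + 1), coverageTerm n X r s α)
      (fun α => meanCoverage α n r s) (Ioo 0 1) :=
    fun α hα => (meanCoverage_eq_sum_coverageTerm hr hs hα).symm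
  have hXn : ∀ X ∈ Finset.range (n + 1), X ≤ n := fun X hX =>
    Nat.lt_succ_iff.1 (Finset.mem_range.1 hX)
  refine ⟨(continuousOn_finsetSum _ fun X hX =>
    continuousOn_coverageTerm (hXn X hX) hr hs).congr hsum.symm, ?_⟩
  intro a ha b hb hab
  rw [← hsum ha, ← hsum hb]
  exact Finset.sum_lt_sum (fun X hX => antitoneOn_coverageTerm (hXn X hX) hr hs ha hb hab.le)
    ⟨0, Finset.mem_range.2 n.succ_pos, strictAntiOn_coverageTerm_zero hn hr hs ha hb hab⟩
end
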